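/- Let A be the n-by-n weighted shift matrix with weights a_1, …, a_{n−1}, 0 and B the n-by-n weighted shift matrix with weights b_1, …, b_{n−1}, 0, where all a_i and b_j are strictly positive real numbers, and suppose A ≠ B (i.e., a_j ≠ b_j for some j). If U is an n-by-n complex matrix such that A^k·U = U·B^k and (A*)^k·U = U·(B*)^k for every integer k ≥ 0, then U = 0. -/

import Mathlib

/-!
Write `U e_j` for the columns of `U`. Since `B e_0 = 0`, the relation `A U = U B` gives
`A (U e_0) = 0`, and the kernel of `A` is spanned by `e_0`; the relation `A* U = U B*` gives
`b_j U e_{j+1} = A* (U e_j)`, so inductively `U e_j` is a multiple of `e_j` and `U` is diagonal.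
The entries of `A U = U B` just above the diagonal relate consecutive diagonal entries of `U` by
nonzero factors, so either `U = 0` or no diagonal entry of `U` vanishes. In the latter case
`(A A*) U = U (B B*)`, where `A A*` and `B B*` are diagonal with entries `|a_i|²` and `|b_i|²`,
forces `|a_i| = |b_i|` for all `i`, that is `A = B`.
-/

open Matrix

def wsMatrix {n : ℕ} (a : Fin n → ℂ) : Matrix (Fin n) (Fin n) ℂ :=
  fun i j => if (j : ℕ) = ((i : ℕ) + 1) % n then a i else 0

def UnitarilyEquiv {n : ℕ} (A B : Matrix (Fin n) (Fin n) ℂ) : Prop :=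
  ∃ U : Matrix (Fin n) (Fin n) ℂ, U ∈ Matrix.unitaryGroup (Fin n) ℂ ∧ B = Uᴴ * A * U

section WeightedShift

variable {n : ℕ} [NeZero n]

lemma wsMatrix_apply (c : Fin n → ℂ) (i j : Fin n) :
    wsMatrix c i j = if j = i + 1 then c i else 0 := by
  have hsucc : ((i + 1 : Fin n) : ℕ) = ((i : ℕ) + 1) % n := by
    rw [Fin.val_add, Fin.val_one', Nat.add_mod_mod]
  simp only [wsMatrix, Fin.ext_iff, hsucc]

lemma wsMatrix_mul_apply (c : Fin n → ℂ) (M : Matrix (Fin n) (Fin n) ℂ) (i j : Fin n) :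
    (wsMatrix c * M) i j = c i * M (i + 1) j := by
  simp [mul_apply, wsMatrix_apply, ite_mul]

lemma mul_wsMatrix_apply (c : Fin n → ℂ) (M : Matrix (Fin n) (Fin n) ℂ) (i j : Fin n) :
    (M * wsMatrix c) i j = M i (j - 1) * c (j - 1) := by
  simp only [mul_apply, wsMatrix_apply, mul_ite, mul_zero, eq_comm (a := j),
    ← eq_sub_iff_add_eq, Finset.sum_ite_eq', Finset.mem_univ, if_true]

lemma conjTranspose_wsMatrix_mul_apply (c : Fin n → ℂ) (M : Matrix (Fin n) (Fin n) ℂ)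
    (i j : Fin n) : ((wsMatrix c)ᴴ * M) i j = star (c (i - 1)) * M (i - 1) j := by
  simp only [mul_apply, conjTranspose_apply, wsMatrix_apply, apply_ite star, star_zero, ite_mul,
    zero_mul, eq_comm (a := i), ← eq_sub_iff_add_eq, Finset.sum_ite_eq', Finset.mem_univ, if_true]

lemma mul_conjTranspose_wsMatrix_apply (c : Fin n → ℂ) (M : Matrix (Fin n) (Fin n) ℂ)
    (i j : Fin n) : (M * (wsMatrix c)ᴴ) i j = M i (j + 1) * star (c j) := by
  simp [mul_apply, wsMatrix_apply, apply_ite]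

lemma wsMatrix_mul_conjTranspose (c : Fin n → ℂ) :
    wsMatrix c * (wsMatrix c)ᴴ = diagonal fun i => c i * star (c i) := by
  ext i j
  by_cases h : i = j <;> simp [wsMatrix_mul_apply, wsMatrix_apply, h]

end WeightedShift

lemma Matrix.eq_of_diagonal_mul_eq_mul_diagonal {ι R : Type*} [Fintype ι] [DecidableEq ι]
    [CommRing R] [IsDomain R] {d e : ι → R} {U : Matrix ι ι R}
    (h : diagonal d * U = U * diagonal e) {i j : ι} (hU : U i j ≠ 0) : d i = e j := by
  have hij := congrFun₂ h i j
  rw [diagonal_mul, mul_diagonal, mul_comm (U i j)] at hij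
  exact mul_right_cancel₀ hU hij

section Intertwiner

variable {m : ℕ} {c d : Fin (m + 1) → ℂ} {U : Matrix (Fin (m + 1)) (Fin (m + 1)) ℂ}

lemma intertwines_wsMatrix_apply_zero_of_ne (hc : ∀ k : Fin m, c k.castSucc ≠ 0)
    (hd : d (Fin.last m) = 0) (h : wsMatrix c * U = U * wsMatrix d) {i : Fin (m + 1)}
    (hi : i ≠ 0) : U i 0 = 0 := by
  obtain ⟨k, rfl⟩ := Fin.exists_succ_eq.2 hi
  have hrel := congrFun₂ h k.castSucc 0
  rw [wsMatrix_mul_apply, mul_wsMatrix_apply, Fin.coeSucc_eq_succ,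
    sub_eq_of_eq_add (Fin.last_add_one m).symm, hd, mul_zero] at hrel
  exact (mul_eq_zero_iff_left (hc k)).1 hrel

lemma Matrix.IsDiag.of_intertwines_wsMatrix (hc : ∀ k : Fin m, c k.castSucc ≠ 0)
    (hd : ∀ k : Fin m, d k.castSucc ≠ 0) (hd_last : d (Fin.last m) = 0)
    (h : wsMatrix c * U = U * wsMatrix d) (h' : (wsMatrix c)ᴴ * U = U * (wsMatrix d)ᴴ) :
    U.IsDiag := by
  suffices ∀ j i, i ≠ j → U i j = 0 from fun i j hij => this j i hij
  intro j
  induction j using Fin.induction with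
  | zero => exact fun i hi => intertwines_wsMatrix_apply_zero_of_ne hc hd_last h hi
  | succ k ih =>
    intro i hi
    have hrel := congrFun₂ h' i k.castSucc
    rw [conjTranspose_wsMatrix_mul_apply, mul_conjTranspose_wsMatrix_apply, Fin.coeSucc_eq_succ,
      ih (i - 1) (by rwa [ne_eq, sub_eq_iff_eq_add, Fin.coeSucc_eq_succ]), mul_zero] at hrel
    exact (mul_eq_zero_iff_right (star_ne_zero.2 (hd k))).1 hrel.symm

lemma intertwines_wsMatrix_apply_succ_eq_zero_iff (hc : ∀ k : Fin m, c k.castSucc ≠ 0)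
    (hd : ∀ k : Fin m, d k.castSucc ≠ 0) (h : wsMatrix c * U = U * wsMatrix d) (k : Fin m) :
    U k.succ k.succ = 0 ↔ U k.castSucc k.castSucc = 0 := by
  have hrel := congrFun₂ h k.castSucc k.succ
  rw [wsMatrix_mul_apply, mul_wsMatrix_apply, Fin.coeSucc_eq_succ,
    sub_eq_of_eq_add (Fin.coeSucc_eq_succ (a := k)).symm] at hrel
  rw [← mul_eq_zero_iff_left (hc k), hrel, mul_eq_zero_iff_right (hd k)]

lemma intertwines_wsMatrix_apply_self_eq_zero_iff (hc : ∀ k : Fin m, c k.castSucc ≠ 0)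
    (hd : ∀ k : Fin m, d k.castSucc ≠ 0) (h : wsMatrix c * U = U * wsMatrix d)
    (i : Fin (m + 1)) : U i i = 0 ↔ U 0 0 = 0 :=
  Fin.induction Iff.rfl
    (fun k ih => (intertwines_wsMatrix_apply_succ_eq_zero_iff hc hd h k).trans ih) i

theorem eq_zero_or_norm_eq_of_intertwines_wsMatrix (hc : ∀ k : Fin m, c k.castSucc ≠ 0)
    (hd : ∀ k : Fin m, d k.castSucc ≠ 0) (hd_last : d (Fin.last m) = 0)
    (h : wsMatrix c * U = U * wsMatrix d) (h' : (wsMatrix c)ᴴ * U = U * (wsMatrix d)ᴴ) :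
    U = 0 ∨ ∀ i, ‖c i‖ = ‖d i‖ := by
  have hdiag := IsDiag.of_intertwines_wsMatrix hc hd hd_last h h'
  have hentry := intertwines_wsMatrix_apply_self_eq_zero_iff hc hd h
  rcases eq_or_ne (U 0 0) 0 with h0 | h0
  · left
    ext i j
    rcases eq_or_ne i j with rfl | hij
    · exact (hentry i).2 h0
    · exact hdiag hij
  · right
    intro i
    have hsq :
        diagonal (fun i => c i * star (c i)) * U = U * diagonal fun i => d i * star (d i) := by
      rw [← wsMatrix_mul_conjTranspose, ← wsMatrix_mul_conjTranspose, Matrix.mul_assoc, h',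
        ← Matrix.mul_assoc, h, Matrix.mul_assoc]
    have hnorm := eq_of_diagonal_mul_eq_mul_diagonal hsq ((hentry i).not.2 h0)
    simp only [Complex.star_def, Complex.mul_conj'] at hnorm
    exact (pow_left_inj₀ (norm_nonneg _) (norm_nonneg _) two_ne_zero).1 (by exact_mod_cast hnorm)

end Intertwiner

theorem stmt8_general (n : ℕ)
    (a b : Fin n → ℝ)
    (ha : ∀ i : Fin n, (i : ℕ) + 1 < n → 0 < a i)
    (hb : ∀ j : Fin n, (j : ℕ) + 1 < n → 0 < b j)
    (A B : Matrix (Fin n) (Fin n) ℂ)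
    (hA : A = wsMatrix fun i => if (i : ℕ) + 1 < n then (a i : ℂ) else 0)
    (hB : B = wsMatrix fun j => if (j : ℕ) + 1 < n then (b j : ℂ) else 0)
    (hAB : A ≠ B)
    (U : Matrix (Fin n) (Fin n) ℂ)
    (hU1 : ∀ k : ℕ, A ^ k * U = U * B ^ k)
    (hU2 : ∀ k : ℕ, Aᴴ ^ k * U = U * Bᴴ ^ k) :
    U = 0 := by
  obtain _ | m := n
  · exact Subsingleton.elim _ _
  have weight_ne_zero (w : Fin (m + 1) → ℝ)
      (hw : ∀ i : Fin (m + 1), (i : ℕ) + 1 < m + 1 → 0 < w i) (k : Fin m) :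
      (if (k.castSucc : ℕ) + 1 < m + 1 then (w k.castSucc : ℂ) else 0) ≠ 0 := by
    rw [if_pos (by simp)]
    exact Complex.ofReal_ne_zero.2 (hw _ (by simp)).ne'
  have hU := eq_zero_or_norm_eq_of_intertwines_wsMatrix
    (c := fun i => if (i : ℕ) + 1 < m + 1 then (a i : ℂ) else 0)
    (d := fun j => if (j : ℕ) + 1 < m + 1 then (b j : ℂ) else 0)
    (weight_ne_zero a ha) (weight_ne_zero b hb) (by simp)
    (by simpa [hA, hB] using hU1 1) (by simpa [hA, hB] using hU2 1)
  refine hU.resolve_right fun hnorm => hAB ?_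
  rw [hA, hB]
  congr 1
  funext i
  split_ifs with hi
  · simpa [hi, abs_of_pos (ha i hi), abs_of_pos (hb i hi)] using hnorm i
  · rfl

theorem stmt8 (n : ℕ) (hn : 2 ≤ n)
    (a b : Fin n → ℝ)
    (ha : ∀ i : Fin n, (i : ℕ) + 1 < n → 0 < a i)
    (hb : ∀ j : Fin n, (j : ℕ) + 1 < n → 0 < b j)
    (A B : Matrix (Fin n) (Fin n) ℂ)
    (hA : A = wsMatrix fun i => if (i : ℕ) + 1 < n then (a i : ℂ) else 0)
    (hB : B = wsMatrix fun j => if (j : ℕ) + 1 < n then (b j : ℂ) else 0)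
    (hAB : A ≠ B)
    (U : Matrix (Fin n) (Fin n) ℂ)
    (hU1 : ∀ k : ℕ, A ^ k * U = U * B ^ k)
    (hU2 : ∀ k : ℕ, Aᴴ ^ k * U = U * Bᴴ ^ k) :
    U = 0 :=
  stmt8_general n a b ha hb A B hA hB hAB U hU1 hU2
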